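/- arXiv:1603.04505 — 3 statements merged into one kernel-verified Lean document; each statement's English description precedes it below -/
import Mathlib

section
/- The vector of normalization constants is a left eigenvector of the overlap matrix with eigenvalue one: with z_i = (∫ ψ_i dπ)/(Σ_{k=1}^L ∫ ψ_k dπ) and F_ij = ⟨ψ_j*⟩_i, one has z_j = Σ_{i=1}^L z_i F_ij for every j = 1,…,L, and Σ_{i=1}^L z_i = 1. -/
/-!
Writing `φⱼ = ψⱼ / ∑ₖ ψₖ`, we have `zᵢ Fᵢⱼ = (∫ ψᵢ φⱼ dπ) / ∑ₖ ∫ ψₖ dπ`, and the functions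
`ψᵢ φⱼ` sum over `i` to `ψⱼ`, so summing over `i` gives `zⱼ`.
-/

open MeasureTheory Finset

section WithDensity

variable {X : Type*} [MeasurableSpace X] {μ : Measure X} {w : X → ℝ}

theorem integral_withDensity_ofReal (hw : AEMeasurable w μ) (hw0 : ∀ᵐ x ∂μ, 0 ≤ w x)
    (g : X → ℝ) :
    ∫ x, g x ∂μ.withDensity (fun x => ENNReal.ofReal (w x)) = ∫ x, w x * g x ∂μ := by
  rw [integral_withDensity_eq_integral_toReal_smul₀ hw.ennreal_ofReal
    (ae_of_all _ fun _ => ENNReal.ofReal_lt_top)]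
  refine integral_congr_ae ?_
  filter_upwards [hw0] with x hx
  rw [ENNReal.toReal_ofReal hx, smul_eq_mul]

theorem integral_inv_ofReal_smul_withDensity_ofReal (hw : AEMeasurable w μ)
    (hw0 : ∀ᵐ x ∂μ, 0 ≤ w x) {c : ℝ} (hc : 0 ≤ c) (g : X → ℝ) :
    ∫ x, g x ∂((ENNReal.ofReal c)⁻¹ • μ.withDensity fun x => ENNReal.ofReal (w x)) =
      c⁻¹ * ∫ x, w x * g x ∂μ := by
  rw [integral_smul_measure, integral_withDensity_ofReal hw hw0, ENNReal.toReal_inv,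
    ENNReal.toReal_ofReal hc, smul_eq_mul]

end WithDensity

section PartitionOfUnity

variable {X ι : Type*} [Fintype ι] {ψ : ι → X → ℝ}

theorem div_sum_le_one (hψ0 : ∀ i x, 0 ≤ ψ i x) (j : ι) (x : X) :
    ψ j x / ∑ k, ψ k x ≤ 1 :=
  div_le_one_of_le₀ (single_le_sum (fun k _ => hψ0 k x) (mem_univ j))
    (sum_nonneg fun k _ => hψ0 k x)

theorem sum_mul_div_sum (hψ0 : ∀ i x, 0 ≤ ψ i x) (j : ι) (x : X) :
    ∑ i, ψ i x * (ψ j x / ∑ k, ψ k x) = ψ j x := by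
  rw [← sum_mul]
  by_cases hsum : ∑ k, ψ k x = 0
  · have hj : ψ j x = 0 := (sum_eq_zero_iff_of_nonneg fun k _ => hψ0 k x).1 hsum j (mem_univ j)
    rw [hj, zero_div, mul_zero]
  · exact mul_div_cancel₀ _ hsum

variable [MeasurableSpace X] {μ : Measure X}

theorem integrable_mul_div_sum (hψint : ∀ i, Integrable (ψ i) μ) (hψ0 : ∀ i x, 0 ≤ ψ i x)
    (i j : ι) : Integrable (fun x => ψ i x * (ψ j x / ∑ k, ψ k x)) μ := by
  have hmeas : AEStronglyMeasurable (fun x => ψ j x / ∑ k, ψ k x) μ :=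
    ((hψint j).aemeasurable.div
      (Finset.aemeasurable_fun_sum _ fun k _ => (hψint k).aemeasurable)).aestronglyMeasurable
  refine (hψint i).mul_bdd (c := 1) hmeas (ae_of_all _ fun x => ?_)
  rw [Real.norm_of_nonneg (div_nonneg (hψ0 j x) (sum_nonneg fun k _ => hψ0 k x))]
  exact div_sum_le_one hψ0 j x

theorem sum_integral_mul_div_sum (hψint : ∀ i, Integrable (ψ i) μ) (hψ0 : ∀ i x, 0 ≤ ψ i x)
    (j : ι) : ∑ i, ∫ x, ψ i x * (ψ j x / ∑ k, ψ k x) ∂μ = ∫ x, ψ j x ∂μ := by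
  rw [← integral_finsetSum _ fun i _ => integrable_mul_div_sum hψint hψ0 i j]
  simp_rw [sum_mul_div_sum hψ0 j]

end PartitionOfUnity

theorem emus_z_is_left_eigenvector_general
    {X : Type*} [MeasurableSpace X] (π : Measure X) [IsProbabilityMeasure π]
    {L : ℕ} (ψ : Fin L → X → ℝ)
    (hψnonneg : ∀ i x, 0 ≤ ψ i x)
    (hψint : ∀ i, Integrable (ψ i) π) (hψpos : ∀ i, 0 < ∫ x, ψ i x ∂π)
    (hsumpos : ∀ x, 0 < ∑ k, ψ k x)
    (πb : Fin L → Measure X)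
    (hπb : ∀ i, πb i = (ENNReal.ofReal (∫ x, ψ i x ∂π))⁻¹ •
      π.withDensity fun x => ENNReal.ofReal (ψ i x))
    (z : Fin L → ℝ)
    (hz : ∀ i, z i = (∫ x, ψ i x ∂π) / ∑ k, ∫ x, ψ k x ∂π)
    (F : Matrix (Fin L) (Fin L) ℝ)
    (hF : ∀ i j, F i j = ∫ x, ψ j x / ∑ k, ψ k x ∂(πb i)) :
    (∀ j, ∑ i, z i * F i j = z j) ∧ ∑ i, z i = 1 := by
  have hF' : ∀ i j, F i j =
      (∫ x, ψ i x ∂π)⁻¹ * ∫ x, ψ i x * (ψ j x / ∑ k, ψ k x) ∂π := fun i j => by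
    rw [hF, hπb, integral_inv_ofReal_smul_withDensity_ofReal (hψint i).aemeasurable
      (ae_of_all _ (hψnonneg i)) (hψpos i).le]
  refine ⟨fun j => ?_, ?_⟩
  · calc ∑ i, z i * F i j
        = (∑ i, ∫ x, ψ i x * (ψ j x / ∑ k, ψ k x) ∂π) / ∑ k, ∫ x, ψ k x ∂π := by
          rw [sum_div]
          refine sum_congr rfl fun i _ => ?_
          rw [hz, hF']
          field_simp [(hψpos i).ne']
      _ = z j := by rw [sum_integral_mul_div_sum hψint hψnonneg, hz]
  · obtain ⟨x₀⟩ := nonempty_of_isProbabilityMeasure π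
    have hS : 0 < ∑ k, ∫ x, ψ k x ∂π :=
      sum_pos (fun k _ => hψpos k) (nonempty_of_sum_ne_zero (hsumpos x₀).ne')
    simp only [hz]
    rw [← sum_div, div_self hS.ne']

/-- **The vector of normalization constants is a left eigenvector of the overlap
matrix with eigenvalue one:** with z i = (∫ ψ i dπ)/(∑ k ∫ ψ k dπ) and
F i j = ⟨ψ j*⟩ i, one has z j = ∑ i, z i * F i j for every j, and ∑ i, z i = 1. -/
theorem emus_z_is_left_eigenvector
    {X : Type*} [MeasurableSpace X] (π : Measure X) [IsProbabilityMeasure π]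
    {L : ℕ} (ψ : Fin L → X → ℝ)
    (hψmeas : ∀ i, Measurable (ψ i)) (hψnonneg : ∀ i x, 0 ≤ ψ i x)
    (hψint : ∀ i, Integrable (ψ i) π) (hψpos : ∀ i, 0 < ∫ x, ψ i x ∂π)
    (hsumpos : ∀ x, 0 < ∑ k, ψ k x)
    (πb : Fin L → Measure X)
    (hπb : ∀ i, πb i = (ENNReal.ofReal (∫ x, ψ i x ∂π))⁻¹ •
      π.withDensity fun x => ENNReal.ofReal (ψ i x))
    (z : Fin L → ℝ)
    (hz : ∀ i, z i = (∫ x, ψ i x ∂π) / ∑ k, ∫ x, ψ k x ∂π)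
    (F : Matrix (Fin L) (Fin L) ℝ)
    (hF : ∀ i j, F i j = ∫ x, ψ j x / ∑ k, ψ k x ∂(πb i)) :
    (∀ j, ∑ i, z i * F i j = z j) ∧ ∑ i, z i = 1 :=
  emus_z_is_left_eigenvector_general π ψ hψnonneg hψint hψpos hsumpos πb hπb z hz F hF
end

section
/- MBAR family of identities: For each pair (i, j) with 1 ≤ i, j ≤ L, let β_ij : X → ℝ be measurable with ∫ |β_ij| ψ_i ψ_j dπ < ∞. Then for every j = 1,…,L, z_j · Σ_{i=1}^L ⟨β_ij ψ_i⟩_j = Σ_{i=1}^L z_i ⟨β_ij ψ_j⟩_i. -/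
/-! Written as integrals against `π`, the `i`-th terms on both sides equal
`(∑ k, ∫ ψ k dπ)⁻¹ * ∫ β i j ψ i ψ j dπ`, since `z i / ∫ ψ i dπ` does not depend on `i`. -/

open MeasureTheory

section BiasedIntegral

variable {X E : Type*} [MeasurableSpace X] [NormedAddCommGroup E] [NormedSpace ℝ E]
  {μ : Measure X} {ψ : X → ℝ}

theorem integral_withDensity_ofReal_s9 (hψm : AEMeasurable ψ μ) (hψ : 0 ≤ᵐ[μ] ψ) (f : X → E) :
    ∫ x, f x ∂μ.withDensity (fun x => ENNReal.ofReal (ψ x)) = ∫ x, ψ x • f x ∂μ := by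
  rw [integral_withDensity_eq_integral_toReal_smul₀ hψm.ennreal_ofReal
    (.of_forall fun _ => ENNReal.ofReal_lt_top)]
  refine integral_congr_ae ?_
  filter_upwards [hψ] with x hx
  rw [ENNReal.toReal_ofReal hx]

theorem integral_normalized_withDensity_ofReal (hψm : AEMeasurable ψ μ) (hψ : 0 ≤ᵐ[μ] ψ)
    (f : X → E) :
    ∫ x, f x ∂(ENNReal.ofReal (∫ x, ψ x ∂μ))⁻¹ • μ.withDensity (fun x => ENNReal.ofReal (ψ x)) =
      (∫ x, ψ x ∂μ)⁻¹ • ∫ x, ψ x • f x ∂μ := by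
  rw [integral_smul_measure, integral_withDensity_ofReal_s9 hψm hψ, ENNReal.toReal_inv,
    ENNReal.toReal_ofReal (integral_nonneg_of_ae hψ)]

end BiasedIntegral

theorem mbar_family_of_identities_general
    {X : Type*} [MeasurableSpace X] (π : Measure X)
    {L : ℕ} (ψ : Fin L → X → ℝ)
    (hψmeas : ∀ i, Measurable (ψ i)) (hψnonneg : ∀ i x, 0 ≤ ψ i x)
    (hψpos : ∀ i, 0 < ∫ x, ψ i x ∂π)
    (πb : Fin L → Measure X)
    (hπb : ∀ i, πb i = (ENNReal.ofReal (∫ x, ψ i x ∂π))⁻¹ •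
      π.withDensity fun x => ENNReal.ofReal (ψ i x))
    (z : Fin L → ℝ)
    (hz : ∀ i, z i = (∫ x, ψ i x ∂π) / ∑ k, ∫ x, ψ k x ∂π)
    (β : Fin L → Fin L → X → ℝ) :
    ∀ j, z j * ∑ i, ∫ x, β i j x * ψ i x ∂(πb j) =
      ∑ i, z i * ∫ x, β i j x * ψ j x ∂(πb i) := by
  intro j
  have hπb_integral (i : Fin L) (f : X → ℝ) :
      ∫ x, f x ∂(πb i) = (∫ x, ψ i x ∂π)⁻¹ * ∫ x, ψ i x * f x ∂π := by
    rw [hπb i, integral_normalized_withDensity_ofReal (hψmeas i).aemeasurable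
      (.of_forall (hψnonneg i))]
    simp only [smul_eq_mul]
  have hz_div (i : Fin L) : z i * (∫ x, ψ i x ∂π)⁻¹ = (∑ k, ∫ x, ψ k x ∂π)⁻¹ := by
    rw [hz i, div_mul_eq_mul_div, mul_inv_cancel₀ (hψpos i).ne', one_div]
  simp only [Finset.mul_sum, hπb_integral, ← mul_assoc, hz_div]
  congr! 3 with i
  ext x
  ring

/-- **MBAR family of identities:** for measurable β i j with
∫ |β i j| ψ i ψ j dπ < ∞, for every j:
z j * ∑ i, ⟨β i j * ψ i⟩ j = ∑ i, z i * ⟨β i j * ψ j⟩ i. -/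
theorem mbar_family_of_identities
    {X : Type*} [MeasurableSpace X] (π : Measure X) [IsProbabilityMeasure π]
    {L : ℕ} (ψ : Fin L → X → ℝ)
    (hψmeas : ∀ i, Measurable (ψ i)) (hψnonneg : ∀ i x, 0 ≤ ψ i x)
    (hψint : ∀ i, Integrable (ψ i) π) (hψpos : ∀ i, 0 < ∫ x, ψ i x ∂π)
    (hsumpos : ∀ x, 0 < ∑ k, ψ k x)
    (πb : Fin L → Measure X)
    (hπb : ∀ i, πb i = (ENNReal.ofReal (∫ x, ψ i x ∂π))⁻¹ •
      π.withDensity fun x => ENNReal.ofReal (ψ i x))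
    (z : Fin L → ℝ)
    (hz : ∀ i, z i = (∫ x, ψ i x ∂π) / ∑ k, ∫ x, ψ k x ∂π)
    (β : Fin L → Fin L → X → ℝ)
    (hβmeas : ∀ i j, Measurable (β i j))
    (hβint : ∀ i j, Integrable (fun x => β i j x * ψ i x * ψ j x) π) :
    ∀ j, z j * ∑ i, ∫ x, β i j x * ψ i x ∂(πb j) =
      ∑ i, z i * ∫ x, β i j x * ψ j x ∂(πb i) :=
  mbar_family_of_identities_general π ψ hψmeas hψnonneg hψpos πb hπb z hz β
end

section
/- Consistency of iterative EMUS: Let ψ_1,…,ψ_L : X → [0,∞) satisfy Σ_{k=1}^L ψ_k(x) > 0 for all x ∈ X, and for u ∈ (0,∞)^L, x ∈ X define h_ij(u, x) = u_i ψ_j(x)/(Σ_{k=1}^L u_k ψ_k(x)). For each i let (x_t^i)_{t≥0} be a sequence in X, and for w ∈ (0,∞)^L and positive weights n^N = (n_1^N, …, n_L^N) set u^N_k(w) = n_k^N/w_k, F̄^N_ij(w) = (1/N) Σ_{t=0}^{N−1} h_ij(u^N(w), x_t^i), and F_ij(w) = ⟨ h_ij(u(w), ·) ⟩_i with u_k(w)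 = n_k/w_k. Assume: (i) n_i^N → n_i > 0 as N → ∞; (ii) for every w ∈ (0,∞)^L, F̄^N(w) → F(w) entrywise as N → ∞; (iii) F(n) and every F̄^N(w) (w positive) are irreducible, and z, the true vector of normalization constants, is the unique probability left 1-eigenvector of F(n) and has positive entries. Define the iterates z^{0,N} = n^N and, for m ≥ 0, let z^{m+1,N} be the unique vector satisfying (z^{m+1,N})ᵀ F̄^N(z^{m,N}) = (z^{m+1,N})ᵀ with Σ_i z_i^{m+1,N} = 1. Then for every fixed m ≥ 1, z^{m,N} → z as N → ∞. -/
/-!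
The population matrix `F(w)` has the positive right 1-eigenvector `n / w`, and integrating the
identity `∑ i, ψ i x * h i j u x = ψ j x` against `π` shows that the true normalization constants
are a left 1-eigenvector of `F(w)` for every positive `w`. The entries of `F(w)` for different `w`
are comparable up to positive factors, so all `F(w)` are irreducible and, by the
Perron–Frobenius argument, `z` is the unique probability left 1-eigenvector of each of them.
The kernel `h` has a modulus of continuity in the weights that is uniform in `x`, so
`F̄^N(w_N) → F(w₀)` whenever `w_N → w₀ > 0`; as probability left 1-eigenvectors of converging
matrices can only accumulate at those of the limit, `z^{m,N} → w₀` forces `z^{m+1,N} → z`.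
Induction on `m` starts from `z^{0,N} = n^N → n`.
-/

open MeasureTheory Filter

/-- A matrix is irreducible if for every partition of the index set into two
nonempty sets A and B there are i ∈ A, j ∈ B with J i j ≠ 0. -/
def MatIrreducible {L : ℕ} (J : Matrix (Fin L) (Fin L) ℝ) : Prop :=
  ∀ A : Finset (Fin L), A.Nonempty → Aᶜ.Nonempty → ∃ i ∈ A, ∃ j ∈ Aᶜ, J i j ≠ 0

open Matrix Topology

namespace MatIrreducible

variable {L : ℕ} {M : Matrix (Fin L) (Fin L) ℝ}

theorem of_ne_zero {M' : Matrix (Fin L) (Fin L) ℝ} (hM : MatIrreducible M)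
    (h : ∀ i j, M i j ≠ 0 → M' i j ≠ 0) : MatIrreducible M' := fun A hA hAc => by
  obtain ⟨i, hi, j, hj, hij⟩ := hM A hA hAc
  exact ⟨i, hi, j, hj, h i j hij⟩

theorem pos_of_vecMul_eq_self (hirr : MatIrreducible M) (hM : ∀ i j, 0 ≤ M i j)
    {p : Fin L → ℝ} (hp : ∀ i, 0 ≤ p i) (hfix : p ᵥ* M = p) (hne : p ≠ 0) (j : Fin L) :
    0 < p j := by
  by_contra! hj
  let A := Finset.univ.filter fun i => 0 < p i
  have hA : A.Nonempty := by
    obtain ⟨i, hi⟩ := Function.ne_iff.1 hne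
    exact ⟨i, by simpa [A] using (hp i).lt_of_ne' hi⟩
  obtain ⟨i, hi, k, hk, hik⟩ := hirr A hA ⟨j, by simpa [A] using hj⟩
  simp only [A, Finset.mem_filter, Finset.mem_univ, true_and, Finset.mem_compl] at hi hk
  have : p i * M i k ≤ p k := by
    have := Finset.single_le_sum (f := fun l => p l * M l k)
      (fun l _ => mul_nonneg (hp l) (hM l k)) (Finset.mem_univ i)
    rwa [← vecMul_apply_eq_sum, hfix] at this
  nlinarith [mul_pos hi ((hM i k).lt_of_ne' hik)]

variable {u : Fin L → ℝ}

/-- The positive part of a left fixed vector is subinvariant, `v⁺ ≤ v⁺ M`; pairing with the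
positive right fixed vector `u` shows that the defect has zero weight, so it vanishes. -/
theorem vecMul_posPart_eq_self (hM : ∀ i j, 0 ≤ M i j) (hu : ∀ i, 0 < u i)
    (huM : M *ᵥ u = u) {v : Fin L → ℝ} (hv : v ᵥ* M = v) : v⁺ ᵥ* M = v⁺ := by
  have hsub : ∀ j, v⁺ j ≤ (v⁺ ᵥ* M) j := fun j => by
    rw [Pi.posPart_apply, posPart_def, vecMul_apply_eq_sum]
    refine sup_le ?_ (Finset.sum_nonneg fun i _ => mul_nonneg (posPart_nonneg _) (hM i j))
    calc v j = ∑ i, v i * M i j := by rw [← vecMul_apply_eq_sum, hv]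
      _ ≤ _ := Finset.sum_le_sum fun i _ => mul_le_mul_of_nonneg_right (le_posPart _) (hM i j)
  have hdefect : (v⁺ ᵥ* M - v⁺) ⬝ᵥ u = 0 := by
    rw [sub_dotProduct, ← dotProduct_mulVec, huM, sub_self]
  funext j
  have := (Finset.sum_eq_zero_iff_of_nonneg fun i _ =>
    mul_nonneg (sub_nonneg.2 (hsub i)) (hu i).le).1 hdefect j (Finset.mem_univ j)
  simpa [sub_eq_zero, (hu j).ne'] using this

theorem nonneg_or_nonpos_of_vecMul_eq_self (hirr : MatIrreducible M) (hM : ∀ i j, 0 ≤ M i j)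
    (hu : ∀ i, 0 < u i) (huM : M *ᵥ u = u) {v : Fin L → ℝ} (hv : v ᵥ* M = v) :
    (∀ i, 0 ≤ v i) ∨ (∀ i, v i ≤ 0) := by
  by_cases h0 : v⁺ = 0
  · exact Or.inr fun i => posPart_eq_zero.1 (congrFun h0 i)
  · refine Or.inl fun i => (posPart_pos_iff.1 ?_).le
    exact hirr.pos_of_vecMul_eq_self hM (fun i => posPart_nonneg _)
      (vecMul_posPart_eq_self hM hu huM hv) h0 i

theorem mem_stdSimplex_of_vecMul_eq_self (hirr : MatIrreducible M) (hM : ∀ i j, 0 ≤ M i j)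
    (hu : ∀ i, 0 < u i) (huM : M *ᵥ u = u) {v : Fin L → ℝ} (hv : v ᵥ* M = v)
    (hsum : ∑ i, v i = 1) : v ∈ stdSimplex ℝ (Fin L) := by
  refine ⟨(hirr.nonneg_or_nonpos_of_vecMul_eq_self hM hu huM hv).resolve_right fun h => ?_, hsum⟩
  linarith [Finset.sum_nonpos fun i (_ : i ∈ Finset.univ) => h i]

theorem eq_of_vecMul_eq_self (hirr : MatIrreducible M) (hM : ∀ i j, 0 ≤ M i j)
    (hu : ∀ i, 0 < u i) (huM : M *ᵥ u = u) {v v' : Fin L → ℝ} (hv : v ᵥ* M = v)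
    (hsum : ∑ i, v i = 1) (hv' : v' ᵥ* M = v') (hsum' : ∑ i, v' i = 1) : v = v' := by
  have hfix : (v - v') ᵥ* M = v - v' := by rw [sub_vecMul, hv, hv']
  have hzero : ∑ i, (v - v') i = 0 := by simp [Finset.sum_sub_distrib, hsum, hsum']
  rw [← sub_eq_zero]
  rcases hirr.nonneg_or_nonpos_of_vecMul_eq_self hM hu huM hfix with h | h
  · exact (Fintype.sum_eq_zero_iff_of_nonneg h).1 hzero
  · exact (Fintype.sum_eq_zero_iff_of_nonpos h).1 hzero

end MatIrreducible

theorem MapClusterPt.prodMk_of_tendsto {α X Y : Type*} [TopologicalSpace X] [TopologicalSpace Y]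
    {l : Filter α} {f : α → X} {g : α → Y} {x : X} {y : Y} (hf : MapClusterPt x l f)
    (hg : Tendsto g l (𝓝 y)) : MapClusterPt (x, y) l fun a => (f a, g a) := by
  rw [((𝓝 x).basis_sets.prod_nhds (𝓝 y).basis_sets).mapClusterPt_iff_frequently]
  rintro ⟨s, t⟩ ⟨hs, ht⟩
  exact (mapClusterPt_iff_frequently.1 hf s hs).and_eventually (hg ht)

/-- Probability left fixed vectors of converging matrices accumulate only at probability left
fixed vectors of the limit, and the simplex is compact. -/
theorem tendsto_of_vecMul_eq_self {α ι : Type*} [Fintype ι] {l : Filter α}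
    {M : α → Matrix ι ι ℝ} {M₀ : Matrix ι ι ℝ} (hM : Tendsto M l (𝓝 M₀)) {v : α → ι → ℝ}
    (hv : ∀ᶠ a in l, v a ∈ stdSimplex ℝ ι ∧ v a ᵥ* M a = v a) {z : ι → ℝ}
    (hz : ∀ z', z' ᵥ* M₀ = z' → ∑ i, z' i = 1 → z' = z) : Tendsto v l (𝓝 z) := by
  refine (isCompact_stdSimplex ℝ ι).tendsto_nhds_of_unique_mapClusterPt
    (hv.mono fun _ h => h.1) fun x hx hcl => hz x ?_ hx.2
  have hclosed : IsClosed {p : (ι → ℝ) × Matrix ι ι ℝ | p.1 ᵥ* p.2 = p.1} :=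
    isClosed_eq (continuous_fst.matrix_vecMul continuous_snd) continuous_fst
  exact hclosed.mem_of_mapClusterPt (hcl.prodMk_of_tendsto hM) (hv.mono fun _ h => h.2)

theorem Filter.Tendsto.eventually_forall_pos {α ι : Type*} [Finite ι] {l : Filter α}
    {w : α → ι → ℝ} {w₀ : ι → ℝ} (hw : Tendsto w l (𝓝 w₀)) (hw₀ : ∀ k, 0 < w₀ k) :
    ∀ᶠ a in l, ∀ k, 0 < w a k :=
  eventually_all.2 fun k => (tendsto_pi_nhds.1 hw k).eventually (eventually_gt_nhds (hw₀ k))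

section Kernel

variable {ι X : Type*} [Fintype ι] {ψ : ι → X → ℝ} {u v : ι → ℝ}

noncomputable def overlapKernel (ψ : ι → X → ℝ) (i j : ι) (u : ι → ℝ) (x : X) : ℝ :=
  u i * ψ j x / ∑ k, u k * ψ k x

theorem sum_mul_apply_pos (hψ : ∀ k x, 0 ≤ ψ k x) (hsum : ∀ x, 0 < ∑ k, ψ k x)
    (hu : ∀ k, 0 < u k) (x : X) : 0 < ∑ k, u k * ψ k x := by
  obtain ⟨k, -, hk⟩ := Finset.exists_lt_of_sum_lt (by simpa using hsum x :
    ∑ _k : ι, (0 : ℝ) < ∑ k, ψ k x)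
  exact Finset.sum_pos' (fun k _ => mul_nonneg (hu k).le (hψ k x))
    ⟨k, Finset.mem_univ k, mul_pos (hu k) hk⟩

theorem mul_le_sum_mul (hψ : ∀ k x, 0 ≤ ψ k x) (hu : ∀ k, 0 < u k) (x : X) (l : ι) :
    u l * ψ l x ≤ ∑ k, u k * ψ k x :=
  Finset.single_le_sum (f := fun k => u k * ψ k x)
    (fun k _ => mul_nonneg (hu k).le (hψ k x)) (Finset.mem_univ l)

theorem div_sum_mul_le (hψ : ∀ k x, 0 ≤ ψ k x) (hsum : ∀ x, 0 < ∑ k, ψ k x)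
    (hu : ∀ k, 0 < u k) (x : X) (l : ι) : ψ l x / ∑ k, u k * ψ k x ≤ 1 / u l := by
  rw [div_le_div_iff₀ (sum_mul_apply_pos hψ hsum hu x) (hu l), one_mul, mul_comm]
  exact mul_le_sum_mul hψ hu x l

theorem overlapKernel_nonneg (hψ : ∀ k x, 0 ≤ ψ k x) (hsum : ∀ x, 0 < ∑ k, ψ k x)
    (hu : ∀ k, 0 < u k) (i j : ι) (x : X) : 0 ≤ overlapKernel ψ i j u x :=
  div_nonneg (mul_nonneg (hu i).le (hψ j x)) (sum_mul_apply_pos hψ hsum hu x).le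

theorem norm_overlapKernel_le (hψ : ∀ k x, 0 ≤ ψ k x) (hsum : ∀ x, 0 < ∑ k, ψ k x)
    (hu : ∀ k, 0 < u k) (i j : ι) (x : X) : ‖overlapKernel ψ i j u x‖ ≤ u i / u j := by
  rw [Real.norm_of_nonneg (overlapKernel_nonneg hψ hsum hu i j x), overlapKernel, mul_div_assoc,
    div_eq_mul_one_div (u i)]
  exact mul_le_mul_of_nonneg_left (div_sum_mul_le hψ hsum hu x j) (hu i).le

theorem sum_overlapKernel_mul_self (hψ : ∀ k x, 0 ≤ ψ k x) (hsum : ∀ x, 0 < ∑ k, ψ k x)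
    (hu : ∀ k, 0 < u k) (i : ι) (x : X) : ∑ j, overlapKernel ψ i j u x * u j = u i := by
  have hD := (sum_mul_apply_pos hψ hsum hu x).ne'
  simp only [overlapKernel, div_mul_eq_mul_div, ← Finset.sum_div]
  rw [div_eq_iff hD, Finset.mul_sum]
  exact Finset.sum_congr rfl fun j _ => by ring

theorem sum_mul_overlapKernel (hψ : ∀ k x, 0 ≤ ψ k x) (hsum : ∀ x, 0 < ∑ k, ψ k x)
    (hu : ∀ k, 0 < u k) (j : ι) (x : X) : ∑ i, ψ i x * overlapKernel ψ i j u x = ψ j x := by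
  have hD := (sum_mul_apply_pos hψ hsum hu x).ne'
  simp only [overlapKernel, mul_div_assoc', ← Finset.sum_div]
  rw [div_eq_iff hD, Finset.mul_sum]
  exact Finset.sum_congr rfl fun i _ => by ring

theorem overlapKernel_le_mul (hψ : ∀ k x, 0 ≤ ψ k x) (hsum : ∀ x, 0 < ∑ k, ψ k x)
    (hu : ∀ k, 0 < u k) (hv : ∀ k, 0 < v k) (i j : ι) (x : X) :
    overlapKernel ψ i j u x ≤ u i / v i * (∑ l, v l / u l) * overlapKernel ψ i j v x := by
  have hDu := sum_mul_apply_pos hψ hsum hu x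
  have hDv := sum_mul_apply_pos hψ hsum hv x
  have hcomp : ∑ k, v k * ψ k x ≤ (∑ l, v l / u l) * ∑ k, u k * ψ k x := by
    rw [Finset.mul_sum]
    refine Finset.sum_le_sum fun k _ => ?_
    calc v k * ψ k x = v k / u k * (u k * ψ k x) := by field_simp [(hu k).ne']
      _ ≤ _ := mul_le_mul_of_nonneg_right
          (Finset.single_le_sum (fun l _ => (div_pos (hv l) (hu l)).le) (Finset.mem_univ k))
          (mul_nonneg (hu k).le (hψ k x))
  rw [overlapKernel, overlapKernel, div_le_iff₀ hDu]
  field_simp [(hv i).ne']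
  nlinarith [mul_le_mul_of_nonneg_left hcomp (mul_nonneg (hu i).le (hψ j x))]

end Kernel

section Modulus

variable {ι X : Type*} [Fintype ι] {ψ : ι → X → ℝ} {u v : ι → ℝ}

theorem abs_sum_mul_sub_div_le (hψ : ∀ k x, 0 ≤ ψ k x) (hsum : ∀ x, 0 < ∑ k, ψ k x)
    (hv : ∀ k, 0 < v k) (x : X) :
    |∑ k, v k * ψ k x - ∑ k, u k * ψ k x| / ∑ k, v k * ψ k x ≤ ∑ k, |u k - v k| / v k := by
  rw [← Finset.sum_sub_distrib, div_le_iff₀ (sum_mul_apply_pos hψ hsum hv x), Finset.sum_mul]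
  refine (Finset.abs_sum_le_sum_abs _ _).trans (Finset.sum_le_sum fun k _ => ?_)
  rw [← sub_mul, abs_mul, abs_of_nonneg (hψ k x), abs_sub_comm, div_mul_eq_mul_div,
    le_div_iff₀ (hv k), mul_assoc, mul_comm (ψ k x)]
  exact mul_le_mul_of_nonneg_left (mul_le_sum_mul hψ hv x k) (abs_nonneg _)

noncomputable def kernelModulus (u v : ι → ℝ) (i j : ι) : ℝ :=
  |u i - v i| / u j + v i / u j * ∑ k, |u k - v k| / v k

theorem abs_overlapKernel_sub_le (hψ : ∀ k x, 0 ≤ ψ k x) (hsum : ∀ x, 0 < ∑ k, ψ k x)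
    (hu : ∀ k, 0 < u k) (hv : ∀ k, 0 < v k) (i j : ι) (x : X) :
    |overlapKernel ψ i j u x - overlapKernel ψ i j v x| ≤ kernelModulus u v i j := by
  have hsplit : ∀ {a b p Du Dv : ℝ}, Du ≠ 0 → Dv ≠ 0 →
      a * p / Du - b * p / Dv = (a - b) * (p / Du) + b * (p / Du) * ((Dv - Du) / Dv) := by
    intros
    field_simp
    ring
  have hDu := sum_mul_apply_pos hψ hsum hu x
  have hDv := sum_mul_apply_pos hψ hsum hv x
  have hψj : 0 ≤ ψ j x / ∑ k, u k * ψ k x := div_nonneg (hψ j x) hDu.le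
  have hψj_le := div_sum_mul_le hψ hsum hu x j
  rw [overlapKernel, overlapKernel, hsplit hDu.ne' hDv.ne', kernelModulus]
  refine (abs_add_le _ _).trans (add_le_add ?_ ?_)
  · rw [abs_mul, abs_of_nonneg hψj, div_eq_mul_one_div |u i - v i|]
    exact mul_le_mul_of_nonneg_left hψj_le (abs_nonneg _)
  · rw [abs_mul, abs_of_nonneg (mul_nonneg (hv i).le hψj), abs_div, abs_of_pos hDv]
    refine mul_le_mul ?_ (abs_sum_mul_sub_div_le hψ hsum hv x)
      (div_nonneg (abs_nonneg _) hDv.le) (div_nonneg (hv i).le (hu j).le)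
    rw [div_eq_mul_one_div (v i)]
    exact mul_le_mul_of_nonneg_left hψj_le (hv i).le

theorem tendsto_kernelModulus {α : Type*} {l : Filter α} {u v : α → ι → ℝ} {u₀ : ι → ℝ}
    (hu : Tendsto u l (𝓝 u₀)) (hv : Tendsto v l (𝓝 u₀)) (hu₀ : ∀ k, 0 < u₀ k) (i j : ι) :
    Tendsto (fun a => kernelModulus (u a) (v a) i j) l (𝓝 0) := by
  have hu' k := tendsto_pi_nhds.1 hu k
  have hv' k := tendsto_pi_nhds.1 hv k
  have := (((hu' i).sub (hv' i)).abs.div (hu' j) (hu₀ j).ne').add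
    (((hv' i).div (hu' j) (hu₀ j).ne').mul
      (tendsto_finsetSum Finset.univ fun k _ => ((hu' k).sub (hv' k)).abs.div (hv' k) (hu₀ k).ne'))
  simpa [kernelModulus] using this

end Modulus

section BiasedMeasure

variable {X : Type*} [MeasurableSpace X] {π : Measure X} {f : X → ℝ}

noncomputable def biasedMeasure (π : Measure X) (f : X → ℝ) : Measure X :=
  (ENNReal.ofReal (∫ x, f x ∂π))⁻¹ • π.withDensity fun x => ENNReal.ofReal (f x)

theorem integral_biasedMeasure (hf : Measurable f) (hf₀ : ∀ x, 0 ≤ f x) (g : X → ℝ) :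
    ∫ x, g x ∂biasedMeasure π f = (∫ x, f x ∂π)⁻¹ * ∫ x, f x * g x ∂π := by
  rw [biasedMeasure, integral_smul_measure, integral_withDensity_eq_integral_toReal_smul
    hf.ennreal_ofReal (ae_of_all _ fun _ => ENNReal.ofReal_lt_top), ENNReal.toReal_inv,
    ENNReal.toReal_ofReal (integral_nonneg hf₀), smul_eq_mul]
  simp only [ENNReal.toReal_ofReal (hf₀ _), smul_eq_mul]

theorem isProbabilityMeasure_biasedMeasure (hf₀ : ∀ x, 0 ≤ f x) (hf : Integrable f π)
    (hf₁ : ∫ x, f x ∂π ≠ 0) : IsProbabilityMeasure (biasedMeasure π f) := by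
  constructor
  rw [biasedMeasure, Measure.smul_apply, withDensity_apply _ MeasurableSet.univ,
    Measure.restrict_univ, ← ofReal_integral_eq_lintegral_ofReal hf (ae_of_all _ hf₀),
    smul_eq_mul]
  exact ENNReal.inv_mul_cancel
    (ENNReal.ofReal_pos.2 ((integral_nonneg hf₀).lt_of_ne' hf₁)).ne' ENNReal.ofReal_ne_top

end BiasedMeasure

section OverlapMatrix

variable {ι X : Type*} [Fintype ι] [MeasurableSpace X] {ψ : ι → X → ℝ} {u v : ι → ℝ}
  {μ : ι → Measure X}

theorem measurable_overlapKernel (hψ : ∀ k, Measurable (ψ k)) (i j : ι) (u : ι → ℝ) :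
    Measurable (overlapKernel ψ i j u) :=
  ((hψ j).const_mul _).div (Finset.measurable_sum _ fun k _ => (hψ k).const_mul _)

theorem integrable_overlapKernel {ν : Measure X} [IsFiniteMeasure ν] (hψm : ∀ k, Measurable (ψ k))
    (hψ : ∀ k x, 0 ≤ ψ k x) (hsum : ∀ x, 0 < ∑ k, ψ k x) (hu : ∀ k, 0 < u k) (i j : ι) :
    Integrable (overlapKernel ψ i j u) ν :=
  (integrable_const (u i / u j)).mono' (measurable_overlapKernel hψm i j u).aestronglyMeasurable
    (ae_of_all _ (norm_overlapKernel_le hψ hsum hu i j))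

noncomputable def overlapMatrix (ψ : ι → X → ℝ) (μ : ι → Measure X) (u : ι → ℝ) :
    Matrix ι ι ℝ :=
  fun i j => ∫ x, overlapKernel ψ i j u x ∂μ i

theorem overlapMatrix_nonneg (hψ : ∀ k x, 0 ≤ ψ k x) (hsum : ∀ x, 0 < ∑ k, ψ k x)
    (hu : ∀ k, 0 < u k) (i j : ι) : 0 ≤ overlapMatrix ψ μ u i j :=
  integral_nonneg fun x => overlapKernel_nonneg hψ hsum hu i j x

theorem overlapMatrix_mulVec_self [∀ i, IsProbabilityMeasure (μ i)] (hψm : ∀ k, Measurable (ψ k))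
    (hψ : ∀ k x, 0 ≤ ψ k x) (hsum : ∀ x, 0 < ∑ k, ψ k x) (hu : ∀ k, 0 < u k) :
    overlapMatrix ψ μ u *ᵥ u = u := by
  funext i
  simp only [mulVec, dotProduct, overlapMatrix, ← integral_mul_const]
  rw [← integral_finsetSum _ fun j _ => (integrable_overlapKernel hψm hψ hsum hu i j).mul_const _]
  simp only [sum_overlapKernel_mul_self hψ hsum hu, integral_const, probReal_univ, one_smul]

theorem overlapMatrix_le_mul [∀ i, IsFiniteMeasure (μ i)] (hψm : ∀ k, Measurable (ψ k))
    (hψ : ∀ k x, 0 ≤ ψ k x) (hsum : ∀ x, 0 < ∑ k, ψ k x) (hu : ∀ k, 0 < u k)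
    (hv : ∀ k, 0 < v k) (i j : ι) :
    overlapMatrix ψ μ u i j ≤ u i / v i * (∑ l, v l / u l) * overlapMatrix ψ μ v i j := by
  rw [overlapMatrix, overlapMatrix, ← integral_const_mul]
  exact integral_mono (integrable_overlapKernel hψm hψ hsum hu i j)
    ((integrable_overlapKernel hψm hψ hsum hv i j).const_mul _)
    fun x => overlapKernel_le_mul hψ hsum hu hv i j x

theorem MatIrreducible.overlapMatrix_of_pos {L : ℕ} {ψ : Fin L → X → ℝ} {μ : Fin L → Measure X}
    [∀ i, IsFiniteMeasure (μ i)] {u v : Fin L → ℝ} (hirr : MatIrreducible (overlapMatrix ψ μ u))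
    (hψm : ∀ k, Measurable (ψ k)) (hψ : ∀ k x, 0 ≤ ψ k x) (hsum : ∀ x, 0 < ∑ k, ψ k x)
    (hu : ∀ k, 0 < u k) (hv : ∀ k, 0 < v k) : MatIrreducible (overlapMatrix ψ μ v) :=
  hirr.of_ne_zero fun i j hij hv₀ => hij <| le_antisymm
    (by simpa [hv₀] using overlapMatrix_le_mul (μ := μ) hψm hψ hsum hu hv i j)
    (overlapMatrix_nonneg hψ hsum hu i j)

theorem vecMul_overlapMatrix_biasedMeasure {π : Measure X} (hψm : ∀ k, Measurable (ψ k))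
    (hψ : ∀ k x, 0 ≤ ψ k x) (hψi : ∀ k, Integrable (ψ k) π) (hψ₀ : ∀ k, ∫ x, ψ k x ∂π ≠ 0)
    (hsum : ∀ x, 0 < ∑ k, ψ k x) (hu : ∀ k, 0 < u k) :
    (fun i => ∫ x, ψ i x ∂π) ᵥ* overlapMatrix ψ (fun i => biasedMeasure π (ψ i)) u
      = fun i => ∫ x, ψ i x ∂π := by
  funext j
  simp only [vecMul_apply_eq_sum, overlapMatrix, integral_biasedMeasure (hψm _) (hψ _),
    mul_inv_cancel_left₀ (hψ₀ _)]
  rw [← integral_finsetSum _ fun i _ => (hψi i).mul_bdd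
    (measurable_overlapKernel hψm i j u).aestronglyMeasurable
    (ae_of_all _ (norm_overlapKernel_le hψ hsum hu i j))]
  simp only [sum_mul_overlapKernel hψ hsum hu]

end OverlapMatrix

section NormalizationConstants

variable {ι X : Type*} [Fintype ι] [MeasurableSpace X] {π : Measure X} {ψ : ι → X → ℝ}

noncomputable def normalizationConstants (π : Measure X) (ψ : ι → X → ℝ) : ι → ℝ :=
  (∑ k, ∫ x, ψ k x ∂π)⁻¹ • fun i => ∫ x, ψ i x ∂π

theorem normalizationConstants_pos (hψpos : ∀ k, 0 < ∫ x, ψ k x ∂π) (i : ι) :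
    0 < normalizationConstants π ψ i :=
  mul_pos (inv_pos.2 (Finset.sum_pos (fun k _ => hψpos k) ⟨i, Finset.mem_univ i⟩)) (hψpos i)

theorem sum_normalizationConstants [Nonempty ι] (hψpos : ∀ k, 0 < ∫ x, ψ k x ∂π) :
    ∑ i, normalizationConstants π ψ i = 1 := by
  simp only [normalizationConstants, Pi.smul_apply, smul_eq_mul, ← Finset.mul_sum]
  exact inv_mul_cancel₀ (Finset.sum_pos (fun k _ => hψpos k) Finset.univ_nonempty).ne'

theorem MatIrreducible.eq_normalizationConstants {L : ℕ} {ψ : Fin L → X → ℝ}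
    {u v : Fin L → ℝ} (hirr : MatIrreducible (overlapMatrix ψ (fun i => biasedMeasure π (ψ i)) u))
    (hψm : ∀ k, Measurable (ψ k)) (hψ : ∀ k x, 0 ≤ ψ k x) (hψi : ∀ k, Integrable (ψ k) π)
    (hψpos : ∀ k, 0 < ∫ x, ψ k x ∂π) (hsum : ∀ x, 0 < ∑ k, ψ k x) (hu : ∀ k, 0 < u k)
    (hv : ∀ k, 0 < v k) {z : Fin L → ℝ}
    (hz : z ᵥ* overlapMatrix ψ (fun i => biasedMeasure π (ψ i)) v = z) (hzsum : ∑ i, z i = 1) :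
    z = normalizationConstants π ψ := by
  have _ i := isProbabilityMeasure_biasedMeasure (hψ i) (hψi i) (hψpos i).ne'
  have : Nonempty (Fin L) := Finset.univ_nonempty_iff.1
    (Finset.nonempty_of_sum_ne_zero (hzsum ▸ one_ne_zero))
  refine (hirr.overlapMatrix_of_pos hψm hψ hsum hu hv).eq_of_vecMul_eq_self
    (overlapMatrix_nonneg hψ hsum hv) hv (overlapMatrix_mulVec_self hψm hψ hsum hv) hz hzsum ?_
    (sum_normalizationConstants hψpos)
  rw [normalizationConstants, smul_vecMul,
    vecMul_overlapMatrix_biasedMeasure hψm hψ hψi (fun k => (hψpos k).ne') hsum hv]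

end NormalizationConstants

theorem abs_average_sub_le {f g : ℕ → ℝ} {c : ℝ} (h : ∀ t, |f t - g t| ≤ c) (N : ℕ) :
    |1 / (N : ℝ) * ∑ t ∈ Finset.range N, f t - 1 / (N : ℝ) * ∑ t ∈ Finset.range N, g t| ≤ c := by
  rw [← mul_sub, ← Finset.sum_sub_distrib, abs_mul, abs_of_nonneg (by positivity)]
  rcases N.eq_zero_or_pos with rfl | hN
  · simpa using (abs_nonneg _).trans (h 0)
  calc 1 / (N : ℝ) * |∑ t ∈ Finset.range N, (f t - g t)|
      ≤ 1 / (N : ℝ) * ∑ _t ∈ Finset.range N, c := by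
        gcongr
        exact (Finset.abs_sum_le_sum_abs _ _).trans (Finset.sum_le_sum fun t _ => h t)
    _ = c := by
        rw [Finset.sum_const, Finset.card_range, nsmul_eq_mul]
        field_simp

section SampleOverlapMatrix

variable {ι X : Type*} [Fintype ι] {ψ : ι → X → ℝ} {u : ι → ℝ} {xs : ι → ℕ → X}

noncomputable def sampleOverlapMatrix (ψ : ι → X → ℝ) (xs : ι → ℕ → X) (N : ℕ) (u : ι → ℝ) :
    Matrix ι ι ℝ :=
  fun i j => 1 / (N : ℝ) * ∑ t ∈ Finset.range N, overlapKernel ψ i j u (xs i t)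

theorem sampleOverlapMatrix_nonneg (hψ : ∀ k x, 0 ≤ ψ k x) (hsum : ∀ x, 0 < ∑ k, ψ k x)
    (hu : ∀ k, 0 < u k) (N : ℕ) (i j : ι) : 0 ≤ sampleOverlapMatrix ψ xs N u i j :=
  mul_nonneg (by positivity)
    (Finset.sum_nonneg fun t _ => overlapKernel_nonneg hψ hsum hu i j (xs i t))

theorem sampleOverlapMatrix_mulVec_self (hψ : ∀ k x, 0 ≤ ψ k x) (hsum : ∀ x, 0 < ∑ k, ψ k x)
    (hu : ∀ k, 0 < u k) {N : ℕ} (hN : N ≠ 0) : sampleOverlapMatrix ψ xs N u *ᵥ u = u := by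
  funext i
  simp only [mulVec, dotProduct, sampleOverlapMatrix, mul_assoc, Finset.sum_mul, ← Finset.mul_sum]
  rw [Finset.sum_comm]
  simp only [sum_overlapKernel_mul_self hψ hsum hu, Finset.sum_const, Finset.card_range,
    nsmul_eq_mul]
  field_simp

theorem tendsto_sampleOverlapMatrix_of_tendsto (hψ : ∀ k x, 0 ≤ ψ k x) (hsum : ∀ x, 0 < ∑ k, ψ k x)
    {u v : ℕ → ι → ℝ} {u₀ : ι → ℝ} (hu : Tendsto u atTop (𝓝 u₀)) (hv : Tendsto v atTop (𝓝 u₀))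
    (hu₀ : ∀ k, 0 < u₀ k) {i j : ι} {c : ℝ}
    (hc : Tendsto (fun N => sampleOverlapMatrix ψ xs N (v N) i j) atTop (𝓝 c)) :
    Tendsto (fun N => sampleOverlapMatrix ψ xs N (u N) i j) atTop (𝓝 c) := by
  have hdiff : Tendsto (fun N =>
      sampleOverlapMatrix ψ xs N (u N) i j - sampleOverlapMatrix ψ xs N (v N) i j) atTop (𝓝 0) := by
    refine squeeze_zero_norm' ?_ (tendsto_kernelModulus hu hv hu₀ i j)
    filter_upwards [hu.eventually_forall_pos hu₀, hv.eventually_forall_pos hu₀] with N huN hvN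
    exact abs_average_sub_le (fun t => abs_overlapKernel_sub_le hψ hsum huN hvN i j (xs i t)) N
  simpa using hc.add hdiff

theorem tendsto_of_vecMul_sampleOverlapMatrix_eq_self {L : ℕ} {ψ : Fin L → X → ℝ}
    {xs : Fin L → ℕ → X}
    (hψ : ∀ k x, 0 ≤ ψ k x) (hsum : ∀ x, 0 < ∑ k, ψ k x) {nN : ℕ → Fin L → ℝ}
    (hnN : ∀ N k, 0 < nN N k) {n : Fin L → ℝ} (hn : ∀ k, 0 < n k)
    (hnlim : Tendsto nN atTop (𝓝 n))
    (hirr : ∀ N, 1 ≤ N → ∀ w : Fin L → ℝ, (∀ k, 0 < w k) →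
      MatIrreducible (sampleOverlapMatrix ψ xs N fun k => nN N k / w k))
    {w : ℕ → Fin L → ℝ} {w₀ : Fin L → ℝ} (hw₀ : ∀ k, 0 < w₀ k) (hw : Tendsto w atTop (𝓝 w₀))
    {M : Matrix (Fin L) (Fin L) ℝ}
    (hM : ∀ i j, Tendsto (fun N => sampleOverlapMatrix ψ xs N (fun k => nN N k / w₀ k) i j) atTop
      (𝓝 (M i j)))
    {v : ℕ → Fin L → ℝ}
    (hv : ∀ N, 1 ≤ N → v N ᵥ* sampleOverlapMatrix ψ xs N (fun k => nN N k / w N k) = v N ∧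
      ∑ i, v N i = 1)
    {z : Fin L → ℝ} (hz : ∀ z', z' ᵥ* M = z' → ∑ i, z' i = 1 → z' = z) :
    Tendsto v atTop (𝓝 z) := by
  have hnlim' k := tendsto_pi_nhds.1 hnlim k
  have hu : Tendsto (fun N k => nN N k / w N k) atTop (𝓝 fun k => n k / w₀ k) :=
    tendsto_pi_nhds.2 fun k => (hnlim' k).div (tendsto_pi_nhds.1 hw k) (hw₀ k).ne'
  have hu₀ : Tendsto (fun N k => nN N k / w₀ k) atTop (𝓝 fun k => n k / w₀ k) :=
    tendsto_pi_nhds.2 fun k => (hnlim' k).div_const _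
  refine tendsto_of_vecMul_eq_self (tendsto_pi_nhds.2 fun i => tendsto_pi_nhds.2 fun j =>
    tendsto_sampleOverlapMatrix_of_tendsto hψ hsum hu hu₀ (fun k => div_pos (hn k) (hw₀ k))
      (hM i j))
    ?_ hz
  filter_upwards [hw.eventually_forall_pos hw₀, eventually_ge_atTop 1] with N hwN hN
  have huN k : 0 < nN N k / w N k := div_pos (hnN N k) (hwN k)
  obtain ⟨hfix, hsum₁⟩ := hv N hN
  exact ⟨(hirr N hN _ hwN).mem_stdSimplex_of_vecMul_eq_self
    (sampleOverlapMatrix_nonneg hψ hsum huN N) huN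
    (sampleOverlapMatrix_mulVec_self hψ hsum huN (by omega)) hfix hsum₁, hfix⟩

end SampleOverlapMatrix

theorem iterative_emus_consistency_general
    {X : Type*} [MeasurableSpace X] (π : Measure X)
    {L : ℕ}
    (ψ : Fin L → X → ℝ) (hψmeas : ∀ i, Measurable (ψ i)) (hψnonneg : ∀ i x, 0 ≤ ψ i x)
    (hψint : ∀ i, Integrable (ψ i) π) (hψpos : ∀ i, 0 < ∫ x, ψ i x ∂π)
    (hsumpos : ∀ x, 0 < ∑ k, ψ k x)
    (πb : Fin L → Measure X)
    (hπb : ∀ i, πb i = (ENNReal.ofReal (∫ x, ψ i x ∂π))⁻¹ •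
      π.withDensity fun x => ENNReal.ofReal (ψ i x))
    (h : Fin L → Fin L → (Fin L → ℝ) → X → ℝ)
    (hh : ∀ i j u x, h i j u x = u i * ψ j x / ∑ k, u k * ψ k x)
    (xs : Fin L → ℕ → X)
    (nN : ℕ → Fin L → ℝ) (hnNpos : ∀ N i, 0 < nN N i)
    (n : Fin L → ℝ) (hnpos : ∀ i, 0 < n i)
    (hnlim : ∀ i, Tendsto (fun N => nN N i) atTop (nhds (n i)))
    (Fbar : ℕ → (Fin L → ℝ) → Matrix (Fin L) (Fin L) ℝ)
    (hFbar : ∀ N w i j, Fbar N w i j =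
      (1 / (N : ℝ)) * ∑ t ∈ Finset.range N, h i j (fun k => nN N k / w k) (xs i t))
    (F : (Fin L → ℝ) → Matrix (Fin L) (Fin L) ℝ)
    (hF : ∀ w i j, F w i j = ∫ x', h i j (fun k => n k / w k) x' ∂(πb i))
    (hconv : ∀ w : Fin L → ℝ, (∀ k, 0 < w k) → ∀ i j,
      Tendsto (fun N => Fbar N w i j) atTop (nhds (F w i j)))
    (hFirr : MatIrreducible (F n))
    (hFbarirr : ∀ N, 1 ≤ N → ∀ w : Fin L → ℝ, (∀ k, 0 < w k) →
      MatIrreducible (Fbar N w))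
    (z : Fin L → ℝ) (hzinv : Matrix.vecMul z (F n) = z) (hzsum : ∑ i, z i = 1)
    (zit : ℕ → ℕ → Fin L → ℝ)
    (hzit0 : ∀ N, zit 0 N = nN N)
    (hzit : ∀ m N, 1 ≤ N →
      Matrix.vecMul (zit (m + 1) N) (Fbar N (zit m N)) = zit (m + 1) N ∧
      ∑ i, zit (m + 1) N i = 1) :
    ∀ m, 1 ≤ m → Tendsto (fun N => zit m N) atTop (nhds z) := by
  obtain rfl : h = overlapKernel ψ :=
    funext fun i => funext fun j => funext fun u => funext (hh i j u)
  obtain rfl : πb = fun i => biasedMeasure π (ψ i) := funext hπb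
  have hF' w : F w = overlapMatrix ψ (fun i => biasedMeasure π (ψ i)) fun k => n k / w k :=
    funext fun i => funext (hF w i)
  have hFbar' N w : Fbar N w = sampleOverlapMatrix ψ xs N fun k => nN N k / w k :=
    funext fun i => funext (hFbar N w i)
  simp only [hF', hFbar'] at hconv hFirr hFbarirr hzinv hzit
  have hu {w : Fin L → ℝ} (hw : ∀ k, 0 < w k) k : 0 < n k / w k := div_pos (hnpos k) (hw k)
  have huniq {w : Fin L → ℝ} (hw : ∀ k, 0 < w k) (z' : Fin L → ℝ) :=
    hFirr.eq_normalizationConstants (z := z') hψmeas hψnonneg hψint hψpos hsumpos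
      (hu hnpos) (hu hw)
  have hz : z = normalizationConstants π ψ := huniq hnpos z hzinv hzsum
  have step m {w₀ : Fin L → ℝ} (hw₀ : ∀ k, 0 < w₀ k) (hw : Tendsto (zit m) atTop (𝓝 w₀)) :
      Tendsto (zit (m + 1)) atTop (𝓝 z) :=
    hz ▸ tendsto_of_vecMul_sampleOverlapMatrix_eq_self hψnonneg hsumpos hnNpos hnpos
      (tendsto_pi_nhds.2 hnlim) hFbarirr hw₀ hw (hconv w₀ hw₀) (hzit m) (huniq hw₀)
  intro m hm
  induction m, hm using Nat.le_induction with
  | base => exact step 0 hnpos (by simpa only [funext hzit0] using tendsto_pi_nhds.2 hnlim)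
  | succ m _ ih => exact step m (hz ▸ normalizationConstants_pos hψpos) ih

/-- **Consistency of iterative EMUS:** with the reweighting kernel
h i j u x = u i ψ j x/∑ k u k ψ k x, sample matrices
F̄^N_ij(w) = (1/N) ∑_{t<N} h i j (n^N/w) (x^i_t) converging entrywise to
F_ij(w) = ⟨h i j (n/w) ·⟩_i for every positive w, weights n^N → n > 0,
irreducibility of F(n) and of every F̄^N(w), and z the unique probability left
1-eigenvector of F(n), the iterates z^{0,N} = n^N,
(z^{m+1,N})ᵀ F̄^N(z^{m,N}) = (z^{m+1,N})ᵀ, ∑ z^{m+1,N} = 1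
satisfy z^{m,N} → z as N → ∞, for every fixed m ≥ 1. -/
theorem iterative_emus_consistency
    {X : Type*} [MeasurableSpace X] (π : Measure X) [IsProbabilityMeasure π]
    {L : ℕ} (hL : 0 < L)
    (ψ : Fin L → X → ℝ) (hψmeas : ∀ i, Measurable (ψ i)) (hψnonneg : ∀ i x, 0 ≤ ψ i x)
    (hψint : ∀ i, Integrable (ψ i) π) (hψpos : ∀ i, 0 < ∫ x, ψ i x ∂π)
    (hsumpos : ∀ x, 0 < ∑ k, ψ k x)
    (πb : Fin L → Measure X)
    (hπb : ∀ i, πb i = (ENNReal.ofReal (∫ x, ψ i x ∂π))⁻¹ •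
      π.withDensity fun x => ENNReal.ofReal (ψ i x))
    (h : Fin L → Fin L → (Fin L → ℝ) → X → ℝ)
    (hh : ∀ i j u x, h i j u x = u i * ψ j x / ∑ k, u k * ψ k x)
    (xs : Fin L → ℕ → X)
    (nN : ℕ → Fin L → ℝ) (hnNpos : ∀ N i, 0 < nN N i)
    (n : Fin L → ℝ) (hnpos : ∀ i, 0 < n i)
    (hnlim : ∀ i, Tendsto (fun N => nN N i) atTop (nhds (n i)))
    (Fbar : ℕ → (Fin L → ℝ) → Matrix (Fin L) (Fin L) ℝ)
    (hFbar : ∀ N w i j, Fbar N w i j =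
      (1 / (N : ℝ)) * ∑ t ∈ Finset.range N, h i j (fun k => nN N k / w k) (xs i t))
    (F : (Fin L → ℝ) → Matrix (Fin L) (Fin L) ℝ)
    (hF : ∀ w i j, F w i j = ∫ x', h i j (fun k => n k / w k) x' ∂(πb i))
    (hconv : ∀ w : Fin L → ℝ, (∀ k, 0 < w k) → ∀ i j,
      Tendsto (fun N => Fbar N w i j) atTop (nhds (F w i j)))
    (hFirr : MatIrreducible (F n))
    (hFbarirr : ∀ N, 1 ≤ N → ∀ w : Fin L → ℝ, (∀ k, 0 < w k) →
      MatIrreducible (Fbar N w))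
    (z : Fin L → ℝ) (hzinv : Matrix.vecMul z (F n) = z) (hzsum : ∑ i, z i = 1)
    (hzpos : ∀ i, 0 < z i)
    (hzuniq : ∀ z' : Fin L → ℝ, Matrix.vecMul z' (F n) = z' → ∑ i, z' i = 1 → z' = z)
    (zit : ℕ → ℕ → Fin L → ℝ)
    (hzit0 : ∀ N, zit 0 N = nN N)
    (hzit : ∀ m N, 1 ≤ N →
      Matrix.vecMul (zit (m + 1) N) (Fbar N (zit m N)) = zit (m + 1) N ∧
      ∑ i, zit (m + 1) N i = 1) :
    ∀ m, 1 ≤ m → Tendsto (fun N => zit m N) atTop (nhds z) :=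
  iterative_emus_consistency_general π ψ hψmeas hψnonneg hψint hψpos hsumpos πb hπb h hh xs nN
    hnNpos n hnpos hnlim Fbar hFbar F hF hconv hFirr hFbarirr z hzinv hzsum zit hzit0 hzit
end
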